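/- For x = h and y = hi in B² with 0 < h < 1 (so |x| = |y| and the angle between them is π/2), s_{B²}(x,y) ≤ c·w_{B²}(x,y) with sharp constant c = √((h₀²−2h₀+2)/(2h₀²−2√2·h₀+2)) ≈ 1.07313, where h₀ = (1−√(9−6√2))/(2−√2). -/

import Mathlib

open Metric Set

variable {E : Type*} [NormedAddCommGroup E] [NormedSpace ℝ E]

/-- Distance to the boundary of `G`. -/
noncomputable def dG (G : Set E) (x : E) : ℝ := Metric.infDist x (frontier G)

/-- The point pair function `p_G`. -/
noncomputable def pG (G : Set E) (x y : E) : ℝ :=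
  dist x y / Real.sqrt (dist x y ^ 2 + 4 * dG G x * dG G y)

/-- The triangular ratio metric `s_G`. -/
noncomputable def sG (G : Set E) (x y : E) : ℝ :=
  dist x y / ⨅ z : frontier G, (dist x (z : E) + dist (z : E) y)

/-- The `j*_G` metric. -/
noncomputable def jG (G : Set E) (x y : E) : ℝ :=
  dist x y / (dist x y + 2 * min (dG G x) (dG G y))

/-- The set `X̃` of points `x̃` with `|x−x̃| = 2 d_G(x)` whose midpoint with `x` lies on `∂G`. -/
def Xt (G : Set E) (x : E) : Set E :=
  {x' | dist x x' = 2 * dG G x ∧ (2⁻¹ : ℝ) • (x + x') ∈ frontier G}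

/-- The quasi-metric `w_G` defined for convex domains. -/
noncomputable def wG (G : Set E) (x y : E) : ℝ :=
  dist x y / min (Metric.infDist x (Xt G y)) (Metric.infDist y (Xt G x))

/-- `x̃ = x(2−|x|)/|x|`. -/
noncomputable def tilde (x : ℂ) : ℂ := (((2 - ‖x‖) / ‖x‖ : ℝ) : ℂ) * x

/-- The quasi-metric `w` of the unit disk (on nonzero points). -/
noncomputable def wB (x y : ℂ) : ℝ :=
  ‖x - y‖ / min ‖x - tilde y‖ ‖y - tilde x‖

/-! On the unit circle `|h - z|² = 1 + h² - 2h Re z` and `|z - hi|² = 1 + h² - 2h Im z`, so the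
infimum defining `s(h, hi)` depends on `z` only through `Re z`, `Im z`, with `Re z + Im z ≤ √2`.
It is at least `√2` for every `h`, and equals `2√(1 + h² - √2h)`, attained at `(1 + i)/√2`, when
`2h² ≤ 1`. Hence `s = h/√(2h² - 2√2h + 2)` for small `h` and `s ≤ h` in general, while
`w = h/√(h² - 2h + 2)`. For small `h` the ratio `(s/w)²` is the rational function `sDivWSq`, whose
maximum over `ℝ` is attained at `h₀`; for `2h² ≥ 1` it is at most `h² - 2h + 2 ≤ sDivWSq (√2/2)`. -/

open Complex

section TriangularRatio

variable {F : Type*} [NormedAddCommGroup F] {G : Set F} {x y : F} {m : ℝ}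

theorem sG_eq_div_of_isLeast (hm : IsLeast ((fun z => dist x z + dist z y) '' frontier G) m) :
    sG G x y = dist x y / m := by
  rw [sG, iInf, ← hm.csInf_eq, Set.image_eq_range]

theorem sG_le_div_of_forall_le (hG : (frontier G).Nonempty) (hm : 0 < m)
    (hle : ∀ z ∈ frontier G, m ≤ dist x z + dist z y) : sG G x y ≤ dist x y / m :=
  have : Nonempty (frontier G) := hG.to_subtype
  div_le_div_of_nonneg_left dist_nonneg hm (le_ciInf fun z => hle z z.2)

end TriangularRatio

theorem le_sqrt_add_sqrt {a b m : ℝ} (ha : 0 ≤ a) (hb : 0 ≤ b)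
    (h : ((m ^ 2 - a - b) / 2) ^ 2 ≤ a * b) : m ≤ √a + √b := by
  have hab : (m ^ 2 - a - b) / 2 ≤ √a * √b := by
    rw [← Real.sqrt_mul ha]; exact (le_abs_self _).trans (Real.abs_le_sqrt h)
  nlinarith [Real.sq_sqrt ha, Real.sq_sqrt hb, Real.sqrt_nonneg a, Real.sqrt_nonneg b]

section UnitCircle

variable {h u v : ℝ}

theorem two_mul_sqrt_le_sqrt_add_sqrt (h0 : 0 < h) (hh : 2 * h ^ 2 ≤ 1)
    (huv : u ^ 2 + v ^ 2 = 1) :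
    2 * √(1 + h ^ 2 - √2 * h) ≤ √(1 + h ^ 2 - 2 * h * u) + √(1 + h ^ 2 - 2 * h * v) := by
  have hs2 : √2 ^ 2 = 2 := Real.sq_sqrt zero_le_two
  have h2h : 2 * h ≤ √2 := Real.le_sqrt_of_sq_le (by nlinarith)
  have huv2 : u + v ≤ √2 := Real.le_sqrt_of_sq_le (by nlinarith [sq_nonneg (u - v)])
  have hX : 0 ≤ 1 + h ^ 2 - √2 * h := by nlinarith [sq_nonneg (2 * h - √2)]
  apply le_sqrt_add_sqrt (by nlinarith [sq_nonneg (h - u)]) (by nlinarith [sq_nonneg (h - v)])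
  rw [mul_pow, Real.sq_sqrt hX]
  have hfac : 0 ≤ 4 + 4 * h ^ 2 - 5 * √2 * h - h * (u + v) := by nlinarith
  nlinarith [mul_nonneg (mul_nonneg h0.le (sub_nonneg.2 huv2)) hfac]

theorem sqrt_two_le_sqrt_add_sqrt (huv : u ^ 2 + v ^ 2 = 1) :
    √2 ≤ √(1 + h ^ 2 - 2 * h * u) + √(1 + h ^ 2 - 2 * h * v) := by
  apply le_sqrt_add_sqrt (by nlinarith [sq_nonneg (h - u)]) (by nlinarith [sq_nonneg (h - v)])
  rw [Real.sq_sqrt zero_le_two]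
  nlinarith [sq_nonneg (h * (u + v) - 1)]

end UnitCircle

section UnitDisk

variable {h : ℝ}

theorem re_sq_add_im_sq_of_norm_eq_one {z : ℂ} (hz : ‖z‖ = 1) : z.re ^ 2 + z.im ^ 2 = 1 :=
  Real.sqrt_eq_one.1 (norm_eq_sqrt_sq_add_sq z ▸ hz)

theorem dist_ofReal_of_norm_eq_one {z : ℂ} (hz : ‖z‖ = 1) (h : ℝ) :
    dist (h : ℂ) z = √(1 + h ^ 2 - 2 * h * z.re) := by
  rw [dist_eq, ← Real.sqrt_sq (norm_nonneg _), Complex.sq_norm, normSq_apply]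
  congr 1
  simp only [sub_re, sub_im, ofReal_re, ofReal_im]
  linear_combination re_sq_add_im_sq_of_norm_eq_one hz

theorem dist_ofReal_mul_I_of_norm_eq_one {z : ℂ} (hz : ‖z‖ = 1) (h : ℝ) :
    dist z ((h : ℂ) * I) = √(1 + h ^ 2 - 2 * h * z.im) := by
  rw [dist_eq, ← Real.sqrt_sq (norm_nonneg _), Complex.sq_norm, normSq_apply]
  congr 1
  simp only [sub_re, sub_im, mul_re, mul_im, ofReal_re, ofReal_im, I_re, I_im]
  linear_combination re_sq_add_im_sq_of_norm_eq_one hz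

theorem dist_ofReal_ofReal_mul_I (h0 : 0 ≤ h) : dist (h : ℂ) (h * I) = h * √2 := by
  rw [dist_eq, show (h : ℂ) - h * I = h + ((-h : ℝ) : ℂ) * I by push_cast; ring,
    norm_add_mul_I, show h ^ 2 + (-h) ^ 2 = h ^ 2 * 2 by ring, Real.sqrt_mul (sq_nonneg h),
    Real.sqrt_sq h0]

theorem tilde_ofReal (h0 : 0 < h) : tilde h = (2 - h : ℝ) := by
  rw [tilde, norm_real, Real.norm_of_nonneg h0.le, ← ofReal_mul, div_mul_cancel₀ _ h0.ne']

theorem tilde_ofReal_mul_I (h0 : 0 < h) : tilde (h * I) = (2 - h : ℝ) * I := by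
  rw [tilde, norm_mul, norm_I, mul_one, norm_real, Real.norm_of_nonneg h0.le, ← mul_assoc,
    ← ofReal_mul, div_mul_cancel₀ _ h0.ne']

theorem wB_ofReal_ofReal_mul_I (h0 : 0 < h) : wB h (h * I) = h / √(h ^ 2 - 2 * h + 2) := by
  have hx : ‖(h : ℂ) - tilde (h * I)‖ = √2 * √(h ^ 2 - 2 * h + 2) := by
    rw [tilde_ofReal_mul_I h0, show (h : ℂ) - (2 - h : ℝ) * I = h + ((h - 2 : ℝ) : ℂ) * I by
      push_cast; ring, norm_add_mul_I, ← Real.sqrt_mul zero_le_two]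
    ring_nf
  have hy : ‖(h : ℂ) * I - tilde h‖ = √2 * √(h ^ 2 - 2 * h + 2) := by
    rw [tilde_ofReal h0, show (h : ℂ) * I - (2 - h : ℝ) = ((h - 2 : ℝ) : ℂ) + h * I by
      push_cast; ring, norm_add_mul_I, ← Real.sqrt_mul zero_le_two]
    ring_nf
  rw [wB, hx, hy, min_self, ← dist_eq, dist_ofReal_ofReal_mul_I h0.le, mul_comm h,
    mul_div_mul_left _ _ (by positivity)]

theorem mem_frontier_ball_iff {z : ℂ} : z ∈ frontier (ball (0 : ℂ) 1) ↔ ‖z‖ = 1 := by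
  rw [frontier_ball 0 one_ne_zero, mem_sphere_zero_iff_norm]

theorem sG_ball_ofReal_ofReal_mul_I_le (h0 : 0 ≤ h) : sG (ball (0 : ℂ) 1) h (h * I) ≤ h := by
  have hle := sG_le_div_of_forall_le (G := ball (0 : ℂ) 1) (x := (h : ℂ)) (y := h * I)
    ⟨1, mem_frontier_ball_iff.2 norm_one⟩ (Real.sqrt_pos.2 zero_lt_two) fun z hz => by
      have hz1 := mem_frontier_ball_iff.1 hz
      rw [dist_ofReal_of_norm_eq_one hz1, dist_ofReal_mul_I_of_norm_eq_one hz1]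
      exact sqrt_two_le_sqrt_add_sqrt (re_sq_add_im_sq_of_norm_eq_one hz1)
  rwa [dist_ofReal_ofReal_mul_I h0, mul_div_cancel_right₀ _ (by positivity)] at hle

theorem sG_ball_ofReal_ofReal_mul_I (h0 : 0 < h) (hh : 2 * h ^ 2 ≤ 1) :
    sG (ball (0 : ℂ) 1) h (h * I) = h / √(2 * h ^ 2 - 2 * √2 * h + 2) := by
  set ζ : ℂ := (√2 / 2 : ℝ) + (√2 / 2 : ℝ) * I
  have hζ : ‖ζ‖ = 1 := by
    rw [norm_add_mul_I, div_pow, Real.sq_sqrt zero_le_two]; norm_num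
  have hmin : IsLeast ((fun z => dist (h : ℂ) z + dist z (h * I)) '' frontier (ball (0 : ℂ) 1))
      (2 * √(1 + h ^ 2 - √2 * h)) := by
    refine ⟨⟨ζ, mem_frontier_ball_iff.2 hζ, ?_⟩, ?_⟩
    · simp only [dist_ofReal_of_norm_eq_one hζ, dist_ofReal_mul_I_of_norm_eq_one hζ, ζ,
        add_re, add_im, mul_re, mul_im, ofReal_re, ofReal_im, I_re, I_im]
      ring_nf
    · rintro _ ⟨z, hz, rfl⟩
      have hz1 := mem_frontier_ball_iff.1 hz
      simp only [dist_ofReal_of_norm_eq_one hz1, dist_ofReal_mul_I_of_norm_eq_one hz1]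
      exact two_mul_sqrt_le_sqrt_add_sqrt h0 hh (re_sq_add_im_sq_of_norm_eq_one hz1)
  rw [sG_eq_div_of_isLeast hmin, dist_ofReal_ofReal_mul_I h0.le,
    show 2 * h ^ 2 - 2 * √2 * h + 2 = 2 * (1 + h ^ 2 - √2 * h) by ring, Real.sqrt_mul zero_le_two]
  field_simp
  rw [Real.sq_sqrt zero_le_two]

end UnitDisk

noncomputable def sDivWSq (h : ℝ) : ℝ := (h ^ 2 - 2 * h + 2) / (2 * h ^ 2 - 2 * √2 * h + 2)

section SDivWSq

variable {h h₀ : ℝ}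

theorem two_mul_sq_sub_two_mul_sqrt_two_mul_add_two_pos (h : ℝ) :
    0 < 2 * h ^ 2 - 2 * √2 * h + 2 := by
  nlinarith [sq_nonneg (√2 * h - 1), Real.sq_sqrt zero_le_two]

theorem sDivWSq_le (hh₀ : h₀ = (1 - √(9 - 6 * √2)) / (2 - √2)) (h : ℝ) :
    sDivWSq h ≤ sDivWSq h₀ := by
  rw [sDivWSq, sDivWSq, div_le_div_iff₀ (two_mul_sq_sub_two_mul_sqrt_two_mul_add_two_pos h)
    (two_mul_sq_sub_two_mul_sqrt_two_mul_add_two_pos h₀), hh₀]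
  set s := √2
  set r := √(9 - 6 * s)
  have hs2 : s ^ 2 = 2 := Real.sq_sqrt zero_le_two
  have hs : s < 2 := by nlinarith [Real.sqrt_nonneg 2]
  have hr2 : r ^ 2 = 9 - 6 * s := Real.sq_sqrt (by nlinarith)
  have hr0 : 0 ≤ r := Real.sqrt_nonneg _
  have ha : 0 < 2 - s := by linarith
  field_simp
  -- `h₀ = (1 - r)/(2 - √2)` is a double root of `sDivWSq h₀ - sDivWSq h`
  have key : ((1 - r) * (1 - r - 2 * (2 - s)) + 2 * (2 - s) ^ 2) * (h * (h - s) + 1)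
      - (h * (h - 2) + 2) * ((1 - r) * (1 - r - s * (2 - s)) + (2 - s) ^ 2)
      = r * ((2 - s) * h - (1 - r)) ^ 2 := by
    linear_combination (1 - r - 2 * h + h * s) * hr2 + (-2 + 2 * r + 4 * h - 2 * h * s) * hs2
  linarith [mul_nonneg hr0 (sq_nonneg ((2 - s) * h - (1 - r)))]

theorem sq_sub_two_mul_add_two_le_sDivWSq (h0 : 0 ≤ h) (h1 : h ≤ 1) (hh : 1 ≤ 2 * h ^ 2) :
    h ^ 2 - 2 * h + 2 ≤ sDivWSq (√2 / 2) := by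
  have hs2 : √2 ^ 2 = 2 := Real.sq_sqrt zero_le_two
  have hs : √2 / 2 ≤ h := by nlinarith [Real.sqrt_nonneg 2]
  rw [sDivWSq, show 2 * (√2 / 2) ^ 2 - 2 * √2 * (√2 / 2) + 2 = 1 by nlinarith, div_one]
  nlinarith [mul_nonneg (sub_nonneg.2 hs) (show 0 ≤ 2 - h - √2 / 2 by nlinarith)]

theorem pos_and_two_mul_sq_le_one_of_eq (hh₀ : h₀ = (1 - √(9 - 6 * √2)) / (2 - √2)) :
    0 < h₀ ∧ 2 * h₀ ^ 2 ≤ 1 := by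
  have hs2 : √2 ^ 2 = 2 := Real.sq_sqrt zero_le_two
  have hslb : 1.414 ≤ √2 := by nlinarith [Real.sqrt_nonneg 2]
  have hsub : √2 ≤ 1.4143 := by nlinarith [Real.sqrt_nonneg 2]
  have hr2 : √(9 - 6 * √2) ^ 2 = 9 - 6 * √2 := Real.sq_sqrt (by nlinarith)
  have hrlb : 0.7 ≤ √(9 - 6 * √2) := by nlinarith [Real.sqrt_nonneg (9 - 6 * √2)]
  have hrub : √(9 - 6 * √2) ≤ 0.72 := by nlinarith [Real.sqrt_nonneg (9 - 6 * √2)]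
  have ha : 0 < 2 - √2 := by linarith
  have hlb : 0.48 ≤ h₀ := by rw [hh₀, le_div_iff₀ ha]; nlinarith
  have hub : h₀ ≤ 0.5 := by rw [hh₀, div_le_iff₀ ha]; nlinarith
  constructor <;> nlinarith

theorem sG_eq_sqrt_sDivWSq_mul_wB (h0 : 0 < h) (hh : 2 * h ^ 2 ≤ 1) :
    sG (ball (0 : ℂ) 1) h (h * I) = √(sDivWSq h) * wB h (h * I) := by
  have hN : 0 < h ^ 2 - 2 * h + 2 := by nlinarith [sq_nonneg (h - 1)]
  rw [sG_ball_ofReal_ofReal_mul_I h0 hh, wB_ofReal_ofReal_mul_I h0, sDivWSq,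
    Real.sqrt_div' _ (two_mul_sq_sub_two_mul_sqrt_two_mul_add_two_pos h).le, div_mul_div_comm,
    mul_comm (√_) (h : ℝ), mul_div_mul_right _ _ (Real.sqrt_pos.2 hN).ne']

theorem sG_le_sqrt_mul_wB (h0 : 0 < h) :
    sG (ball (0 : ℂ) 1) h (h * I) ≤ √(h ^ 2 - 2 * h + 2) * wB h (h * I) := by
  have hN : 0 < h ^ 2 - 2 * h + 2 := by nlinarith [sq_nonneg (h - 1)]
  rw [wB_ofReal_ofReal_mul_I h0, mul_div_cancel₀ _ (Real.sqrt_pos.2 hN).ne']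
  exact sG_ball_ofReal_ofReal_mul_I_le h0.le

end SDivWSq

/-- For `x = h`, `y = hi` in `B²` with `0 < h < 1`,
`s_{B²}(x,y) ≤ c · w_{B²}(x,y)` with sharp constant
`c = √((h₀²−2h₀+2)/(2h₀²−2√2 h₀+2))`, `h₀ = (1−√(9−6√2))/(2−√2)`. -/
theorem s_le_c_w_perp :
    ∀ h₀ c : ℝ, h₀ = (1 - Real.sqrt (9 - 6 * Real.sqrt 2)) / (2 - Real.sqrt 2) →
      c = Real.sqrt ((h₀ ^ 2 - 2 * h₀ + 2) / (2 * h₀ ^ 2 - 2 * Real.sqrt 2 * h₀ + 2)) →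
      (∀ h : ℝ, 0 < h → h < 1 →
        sG (Metric.ball (0 : ℂ) 1) (h : ℂ) ((h : ℂ) * Complex.I)
          ≤ c * wB (h : ℂ) ((h : ℂ) * Complex.I)) ∧
      sG (Metric.ball (0 : ℂ) 1) (h₀ : ℂ) ((h₀ : ℂ) * Complex.I)
        = c * wB (h₀ : ℂ) ((h₀ : ℂ) * Complex.I) := by
  intro h₀ c hh₀ hc
  change c = √(sDivWSq h₀) at hc
  obtain ⟨h₀_pos, h₀_le⟩ := pos_and_two_mul_sq_le_one_of_eq hh₀
  refine ⟨fun h h0 h1 => ?_, by rw [hc, sG_eq_sqrt_sDivWSq_mul_wB h₀_pos h₀_le]⟩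
  have hw : 0 ≤ wB h (h * I) := by rw [wB_ofReal_ofReal_mul_I h0]; positivity
  rcases le_total (2 * h ^ 2) 1 with hsmall | hlarge
  · rw [sG_eq_sqrt_sDivWSq_mul_wB h0 hsmall, hc]
    gcongr
    exact sDivWSq_le hh₀ h
  · calc sG (ball (0 : ℂ) 1) h (h * I) ≤ √(h ^ 2 - 2 * h + 2) * wB h (h * I) :=
          sG_le_sqrt_mul_wB h0
      _ ≤ c * wB h (h * I) := by
          rw [hc]
          gcongr
          exact (sq_sub_two_mul_add_two_le_sDivWSq h0.le h1.le hlarge).trans (sDivWSq_le hh₀ _)
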